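/- arXiv:0905.0830 — 3 statements merged into one kernel-verified Lean document; each statement's English description precedes it below -/
import Mathlib

section
/- If α is a badly approximable real number (i.e. inf_{q≥1} q·‖qα‖ > 0, where ‖·‖ is the distance to the nearest integer), then there exists a constant C(α) > 0 such that for every integer q ≥ 2, the sum over integers x with q ≤ x ≤ q³ of 1/(‖αx‖ · x · (log₂ x)²) is at most C(α). -/
/-!
Since `q‖qα‖ ≥ δ`, the points `αx` with `x` in a dyadic block `[2ᵏ, 2ᵏ⁺¹)` are `δ/2ᵏ⁺¹`-separated
modulo `1` and lie at distance at least `δ/2ᵏ⁺¹` from `ℤ`, so `∑ 1/‖αx‖` over the block is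
`O(2ᵏ/δ · (1 + log(2ᵏ/δ))) = O(2ᵏ k)`. Weighting by `1/(x log₂² x) ≤ 1/(2ᵏ log₂² q)`, each of the
`O(log q)` blocks meeting `[q, q³]` contributes `O(1/log q)`.
-/

noncomputable def nint (y : ℝ) : ℝ := |y - round y|

open Finset

lemma nint_nonneg (y : ℝ) : 0 ≤ nint y := abs_nonneg _

lemma nint_le_half (y : ℝ) : nint y ≤ 1 / 2 := abs_sub_round y

lemma nint_eq_min_fract (y : ℝ) : nint y = min (Int.fract y) (1 - Int.fract y) :=
  abs_sub_round_eq_min y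

lemma nint_sub_le_abs_fract_sub_fract (a b : ℝ) :
    nint (a - b) ≤ |Int.fract a - Int.fract b| := by
  refine (round_le (a - b) (⌊a⌋ - ⌊b⌋)).trans_eq ?_
  rw [Int.fract, Int.fract]
  push_cast
  ring_nf

lemma abs_fract_sub_fract_eq_abs_nint_sub_nint {a b : ℝ}
    (h : Int.fract a ≤ 1 / 2 ↔ Int.fract b ≤ 1 / 2) :
    |Int.fract a - Int.fract b| = |nint a - nint b| := by
  rw [nint_eq_min_fract, nint_eq_min_fract]
  by_cases ha : Int.fract a ≤ 1 / 2
  · have hb := h.mp ha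
    rw [min_eq_left (by linarith), min_eq_left (by linarith)]
  · have hb : ¬Int.fract b ≤ 1 / 2 := fun hb => ha (h.mpr hb)
    rw [min_eq_right (by linarith), min_eq_right (by linarith), ← abs_neg]
    ring_nf

lemma abs_sub_lt_of_floor_div_eq {a b ε : ℝ} (hε : 0 < ε) (ha : 0 ≤ a) (hb : 0 ≤ b)
    (h : ⌊a / ε⌋₊ = ⌊b / ε⌋₊) : |a - b| < ε := by
  have h' : ⌊a / ε⌋ = ⌊b / ε⌋ := by
    rw [← Int.natCast_floor_eq_floor (by positivity),
      ← Int.natCast_floor_eq_floor (by positivity), h]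
  have := Int.abs_sub_lt_one_of_floor_eq_floor h'
  rwa [← sub_div, abs_div, abs_of_pos hε, div_lt_one hε] at this

/-- Sorting the points by the side of `1/2` their fractional part lies on and by `⌊‖t‖ / ε⌋`
puts at most one point in each class. -/
lemma sum_one_div_nint_le_of_separated {ι : Type*} (T : Finset ι) (t : ι → ℝ) {ε : ℝ}
    (hε : 0 < ε) (hlow : ∀ i ∈ T, ε ≤ nint (t i))
    (hsep : ∀ i ∈ T, ∀ j ∈ T, i ≠ j → ε ≤ |Int.fract (t i) - Int.fract (t j)|) :
    ∑ i ∈ T, 1 / nint (t i) ≤ 2 / ε * harmonic ⌊(2 * ε)⁻¹⌋₊ := by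
  classical
  set bucket : ι → ℕ := fun i => ⌊nint (t i) / ε⌋₊
  set code : ι → Bool × ℕ := fun i => (decide (Int.fract (t i) ≤ 1 / 2), bucket i)
  have hbucket_pos : ∀ i ∈ T, 0 < bucket i := fun i hi =>
    Nat.floor_pos.mpr ((one_le_div hε).mpr (hlow i hi))
  have hinj : Set.InjOn code T := by
    intro i hi j hj hij
    by_contra hne
    obtain ⟨hside, hbuck⟩ := Prod.mk.inj hij
    have hclose := abs_sub_lt_of_floor_div_eq hε (nint_nonneg _) (nint_nonneg _) hbuck
    rw [← abs_fract_sub_fract_eq_abs_nint_sub_nint (decide_eq_decide.mp hside)] at hclose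
    exact (hsep i hi j hj hne).not_gt hclose
  have hmaps : T.image code ⊆ univ ×ˢ Icc 1 ⌊(2 * ε)⁻¹⌋₊ := by
    simp only [subset_iff, mem_image, mem_product, mem_univ, mem_Icc, true_and]
    rintro _ ⟨i, hi, rfl⟩
    refine ⟨hbucket_pos i hi, Nat.floor_le_floor ?_⟩
    rw [mul_inv, div_eq_mul_inv]
    exact mul_le_mul_of_nonneg_right (by simpa using nint_le_half (t i)) (by positivity)
  calc ∑ i ∈ T, 1 / nint (t i)
      ≤ ∑ i ∈ T, ε⁻¹ * ((code i).2 : ℝ)⁻¹ := by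
        refine sum_le_sum fun i hi => ?_
        rw [← mul_inv, ← one_div]
        refine one_div_le_one_div_of_le (by have := hbucket_pos i hi; positivity) ?_
        rw [mul_comm, ← le_div_iff₀ hε]
        exact Nat.floor_le (div_nonneg (nint_nonneg _) hε.le)
    _ = ∑ p ∈ T.image code, ε⁻¹ * (p.2 : ℝ)⁻¹ := by rw [sum_image hinj]
    _ ≤ ∑ p ∈ univ ×ˢ Icc 1 ⌊(2 * ε)⁻¹⌋₊, ε⁻¹ * (p.2 : ℝ)⁻¹ :=
        sum_le_sum_of_subset_of_nonneg hmaps fun _ _ _ => by positivity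
    _ = 2 / ε * harmonic ⌊(2 * ε)⁻¹⌋₊ := by
        simp only [sum_product, sum_const, card_univ, Fintype.card_bool, nsmul_eq_mul,
          harmonic_eq_sum_Icc, ← mul_sum]
        push_cast
        ring

section BadlyApproximable

variable {α δ : ℝ}

lemma le_half_of_forall_le_mul_nint (hα : ∀ q : ℕ, 1 ≤ q → δ ≤ (q : ℝ) * nint (q * α)) :
    δ ≤ 1 / 2 := by
  simpa using (hα 1 le_rfl).trans (by simpa using nint_le_half α)

lemma div_le_nint_mul (hα : ∀ q : ℕ, 1 ≤ q → δ ≤ (q : ℝ) * nint (q * α)) (hδ : 0 < δ)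
    {q N : ℕ} (hq : 1 ≤ q) (hqN : q ≤ N) :
    δ / N ≤ nint (q * α) := by
  have hq' : (0 : ℝ) < q := by exact_mod_cast hq
  calc δ / N ≤ δ / q := div_le_div_of_nonneg_left hδ.le hq' (by exact_mod_cast hqN)
    _ ≤ nint (q * α) := by rw [div_le_iff₀ hq', mul_comm]; exact hα q hq

/-- The points `α x`, `1 ≤ x < 2n`, are `δ / 2n`-separated modulo `1`, since any two differ by
`α d` with `1 ≤ d < 2n`. -/
lemma sum_one_div_nint_le (hα : ∀ q : ℕ, 1 ≤ q → δ ≤ (q : ℝ) * nint (q * α)) (hδ : 0 < δ) (n : ℕ)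
    {T : Finset ℕ} (hT : T ⊆ Ico 1 (2 * n)) :
    ∑ x ∈ T, 1 / nint (α * x) ≤ 4 * n / δ * harmonic ⌊n / δ⌋₊ := by
  obtain rfl | hn := n.eq_zero_or_pos
  · simp [subset_empty.mp (by simpa using hT)]
  have hε : (0 : ℝ) < δ / (2 * n) := by positivity
  have hsep : ∀ x ∈ T, ∀ y ∈ T, x < y →
      δ / (2 * n) ≤ |Int.fract (α * y) - Int.fract (α * x)| := by
    intro x hx y hy hxy
    have hx := mem_Ico.mp (hT hx)
    have hy := mem_Ico.mp (hT hy)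
    calc δ / (2 * n) = δ / ((2 * n : ℕ) : ℝ) := by push_cast; rfl
      _ ≤ nint ((y - x : ℕ) * α) := div_le_nint_mul hα hδ (by omega) (by omega)
      _ = nint (α * y - α * x) := by rw [Nat.cast_sub hxy.le]; ring_nf
      _ ≤ _ := nint_sub_le_abs_fract_sub_fract _ _
  have key := sum_one_div_nint_le_of_separated T (fun x : ℕ => α * x) hε
    (fun x hx => by
      have hx := mem_Ico.mp (hT hx)
      have := div_le_nint_mul hα hδ (N := 2 * n) hx.1 hx.2.le
      push_cast at this
      simpa [mul_comm] using this)
    (fun x hx y hy hne => by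
      rcases hne.lt_or_gt with hxy | hxy
      · rw [abs_sub_comm]; exact hsep x hx y hy hxy
      · exact hsep y hy x hx hxy)
  have hscale : (2 * (δ / (2 * n)))⁻¹ = n / δ := by field_simp
  rwa [hscale, div_div_eq_mul_div, ← mul_assoc, show (2 : ℝ) * 2 = 4 by norm_num] at key


lemma sum_dyadic_fiber_le (hα : ∀ q : ℕ, 1 ≤ q → δ ≤ (q : ℝ) * nint (q * α)) (hδ : 0 < δ)
    {q : ℕ} (hq : 2 ≤ q) {S : Finset ℕ} (hS : ∀ x ∈ S, q ≤ x) (k : ℕ) :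
    ∑ x ∈ S with Nat.log 2 x = k, 1 / (nint (α * x) * x * Real.logb 2 x ^ 2) ≤
      4 / (δ * Real.logb 2 q ^ 2) * (1 + k * Real.log 2 - Real.log δ) := by
  set L := Real.logb 2 q
  have hq' : (2 : ℝ) ≤ q := by exact_mod_cast hq
  have hL : 0 < L := Real.logb_pos one_lt_two (by linarith)
  have hfiber : ∀ x ∈ {x ∈ S | Nat.log 2 x = k}, 1 ≤ x ∧ 2 ^ k ≤ x ∧ x < 2 * 2 ^ k := by
    intro x hx
    obtain ⟨hxS, rfl⟩ := mem_filter.mp hx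
    have hqx := hS x hxS
    refine ⟨by omega, Nat.pow_log_le_self 2 (by omega), ?_⟩
    simpa [pow_succ, mul_comm] using Nat.lt_pow_succ_log_self one_lt_two x
  calc ∑ x ∈ S with Nat.log 2 x = k, 1 / (nint (α * x) * x * Real.logb 2 x ^ 2)
      ≤ ∑ x ∈ S with Nat.log 2 x = k, 1 / (2 ^ k * L ^ 2) * (1 / nint (α * x)) := by
        refine sum_le_sum fun x hx => ?_
        obtain ⟨hx1, hkx, -⟩ := hfiber x hx
        have hnint : 0 < nint (α * x) := by
          rw [mul_comm]
          exact (div_pos hδ (by exact_mod_cast hx1)).trans_le (div_le_nint_mul hα hδ hx1 le_rfl)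
        have hLx : L ≤ Real.logb 2 x :=
          Real.logb_le_logb_of_le one_lt_two (by linarith)
            (by exact_mod_cast hS x (mem_filter.mp hx).1)
        rw [div_mul_div_comm, one_mul]
        refine one_div_le_one_div_of_le (by positivity) ?_
        calc 2 ^ k * L ^ 2 * nint (α * x) = nint (α * x) * 2 ^ k * L ^ 2 := by ring
          _ ≤ nint (α * x) * x * Real.logb 2 x ^ 2 := by gcongr; exact_mod_cast hkx
    _ = 1 / (2 ^ k * L ^ 2) * ∑ x ∈ S with Nat.log 2 x = k, 1 / nint (α * x) := by rw [mul_sum]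
    _ ≤ 1 / (2 ^ k * L ^ 2) * (4 * (2 ^ k : ℕ) / δ * harmonic ⌊(2 ^ k : ℕ) / δ⌋₊) := by
        gcongr
        exact sum_one_div_nint_le hα hδ _ fun x hx => by
          obtain ⟨hx1, -, hx2⟩ := hfiber x hx
          exact mem_Ico.mpr ⟨hx1, hx2⟩
    _ = 4 / (δ * L ^ 2) * harmonic ⌊2 ^ k / δ⌋₊ := by
        push_cast
        field_simp
    _ ≤ 4 / (δ * L ^ 2) * (1 + Real.log (2 ^ k / δ)) := by
        gcongr
        refine harmonic_floor_le_one_add_log _ ((one_le_div hδ).mpr ?_)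
        linarith [one_le_pow₀ (M₀ := ℝ) one_le_two (n := k), le_half_of_forall_le_mul_nint hα]
    _ = 4 / (δ * L ^ 2) * (1 + k * Real.log 2 - Real.log δ) := by
        rw [Real.log_div (by positivity) hδ.ne', Real.log_pow]
        ring

end BadlyApproximable

theorem stmt_0 (α : ℝ) (hα : ∃ δ > 0, ∀ q : ℕ, 1 ≤ q → δ ≤ (q : ℝ) * nint (q * α)) :
    ∃ C > 0, ∀ q : ℕ, 2 ≤ q →
      ∑ x ∈ Finset.Icc q (q ^ 3),
        1 / (nint (α * x) * x * (Real.logb 2 x) ^ 2) ≤ C := by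
  obtain ⟨δ, hδ, hα⟩ := hα
  have hlogδ : Real.log δ ≤ 0 :=
    Real.log_nonpos hδ.le (by linarith [le_half_of_forall_le_mul_nint hα])
  set A := 1 + 3 * Real.log 2 - Real.log δ
  have hA : 0 < A := by linarith [Real.log_pos one_lt_two]
  refine ⟨16 * A / δ, by positivity, fun q hq => ?_⟩
  set L := Real.logb 2 q
  set K := Nat.log 2 (q ^ 3)
  have hL : 1 ≤ L := by
    simpa [Real.logb_self_eq_one one_lt_two] using
      Real.logb_le_logb_of_le one_lt_two two_pos (by exact_mod_cast hq : (2 : ℝ) ≤ q)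
  have hK : (K : ℝ) ≤ 3 * L := by
    have := Real.natLog_le_logb (q ^ 3) 2
    rwa [Nat.cast_pow, Real.logb_pow, Nat.cast_ofNat] at this
  calc ∑ x ∈ Icc q (q ^ 3), 1 / (nint (α * x) * x * Real.logb 2 x ^ 2)
      = ∑ k ∈ range (K + 1), ∑ x ∈ Icc q (q ^ 3) with Nat.log 2 x = k,
          1 / (nint (α * x) * x * Real.logb 2 x ^ 2) :=
        (sum_fiberwise_of_maps_to (fun x hx => mem_range.mpr
          (Nat.lt_succ_of_le (Nat.log_mono_right (mem_Icc.mp hx).2))) _).symm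
    _ ≤ ∑ k ∈ range (K + 1), 4 / (δ * L ^ 2) * (L * A) := by
        refine sum_le_sum fun k hk => ?_
        have hk : (k : ℝ) ≤ 3 * L := le_trans (by exact_mod_cast mem_range_succ_iff.mp hk) hK
        refine (sum_dyadic_fiber_le hα hδ hq (fun x hx => (mem_Icc.mp hx).1) k).trans ?_
        gcongr
        nlinarith [Real.log_pos one_lt_two]
    _ ≤ 4 * L * (4 / (δ * L ^ 2) * (L * A)) := by
        rw [sum_const, card_range, nsmul_eq_mul]
        gcongr
        push_cast
        linarith
    _ = 16 * A / δ := by field_simp; ring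
end

section
/- Let p be a prime and let 0 ≤ a < 1. There exists a constant C(a,p) > 0 such that for every integer q ≥ 2, the sum over integers x with q ≤ x ≤ q³ of 1/(x · |x|_p · (log(2/|x|_p))^a · (log x)^{2−a}) is at most C(a,p). -/
/-!
Write `x = p ^ v * m` with `p ∤ m`. Then `x |x|_p = m`, `log (2 / |x|_p) = log (2 p ^ v) ≥
(v + 1) log 2` and `log x ≥ log q`, so the summand is at most `(v + 1) ^ (-a) / m` divided by
`(log 2) ^ a (log q) ^ (2 - a)`. As `x ↦ (v, m)` is injective with `v ≤ log₂ q³` and `m ≤ q³`,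
the sum of these bounds factors as `∑_{v ≤ log₂ q³} (v + 1) ^ (-a) ≪ (log q) ^ (1 - a)` (this
needs `a < 1`) times the harmonic sum `∑_{m ≤ q³} 1 / m ≪ log q`, which cancels `(log q) ^ (2 - a)`.
-/

open Real Finset

noncomputable def pabs (p x : ℕ) : ℝ := (p : ℝ) ^ (-(padicValNat p x : ℤ))

lemma Finset.sum_le_sum_of_injective {ι κ M : Type*} [AddCommMonoid M] [PartialOrder M]
    [IsOrderedAddMonoid M] {s : Finset ι} {t : Finset κ} {f : ι → M} {g : κ → M}
    (e : ι → κ) (he : Function.Injective e) (hst : ∀ i ∈ s, e i ∈ t)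
    (hg : ∀ j ∈ t, 0 ≤ g j) (hfg : ∀ i ∈ s, f i ≤ g (e i)) :
    ∑ i ∈ s, f i ≤ ∑ j ∈ t, g j :=
  calc ∑ i ∈ s, f i ≤ ∑ i ∈ s, g (e i) := sum_le_sum hfg
    _ = ∑ j ∈ s.map ⟨e, he⟩, g j := (sum_map s ⟨e, he⟩ g).symm
    _ ≤ ∑ j ∈ t, g j := sum_le_sum_of_subset_of_nonneg
        (fun j hj => by obtain ⟨i, hi, rfl⟩ := mem_map.1 hj; exact hst i hi)
        (fun j hj _ => hg j hj)

lemma one_sub_mul_rpow_neg_le {a : ℝ} (ha : 0 ≤ a) (ha1 : a ≤ 1) {t : ℝ} (ht : 0 ≤ t) :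
    (1 - a) * (t + 1) ^ (-a) ≤ (t + 1) ^ (1 - a) - t ^ (1 - a) := by
  have ht1 : 0 < t + 1 := by linarith
  have amgm := geom_mean_le_arith_mean2_weighted (sub_nonneg.2 ha1) ha ht ht1.le (by ring)
  have hsplit : (t + 1) ^ (1 - a) = (t + 1) * (t + 1) ^ (-a) := by
    rw [sub_eq_add_neg, rpow_add ht1, rpow_one]
  have hpos : 0 < (t + 1) ^ (-a) := rpow_pos_of_pos ht1 _
  have key : t ^ (1 - a) = t ^ (1 - a) * (t + 1) ^ a * (t + 1) ^ (-a) := by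
    rw [mul_assoc, ← rpow_add ht1, add_neg_cancel, rpow_zero, mul_one]
  rw [hsplit, key]
  nlinarith [mul_le_mul_of_nonneg_right amgm hpos.le]

lemma sum_range_rpow_neg_le {a : ℝ} (ha : 0 ≤ a) (ha1 : a < 1) (V : ℕ) :
    ∑ v ∈ range V, ((v : ℝ) + 1) ^ (-a) ≤ (V : ℝ) ^ (1 - a) / (1 - a) := by
  induction V with
  | zero => simp [zero_rpow (by linarith : (1 : ℝ) - a ≠ 0)]
  | succ V ih =>
    rw [sum_range_succ, Nat.cast_succ, le_div_iff₀ (by linarith), add_mul]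
    have := one_sub_mul_rpow_neg_le ha ha1.le (Nat.cast_nonneg V)
    rw [le_div_iff₀ (by linarith)] at ih
    linarith

lemma sum_Icc_inv_le_one_add_log (n : ℕ) : ∑ m ∈ Icc 1 n, (m : ℝ)⁻¹ ≤ 1 + log n := by
  simpa [harmonic_eq_sum_Icc] using harmonic_le_one_add_log n

lemma sum_Icc_inv_le_mul_log {q : ℕ} (hq : 2 ≤ q) :
    ∑ m ∈ Icc 1 (q ^ 3), (m : ℝ)⁻¹ ≤ (3 + 1 / log 2) * log q := by
  have hlog : log 2 ≤ log q := log_le_log two_pos (by exact_mod_cast hq)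
  have h1 : 1 ≤ 1 / log 2 * log q := by
    rw [one_div_mul_eq_div, one_le_div (log_pos one_lt_two)]; exact hlog
  calc ∑ m ∈ Icc 1 (q ^ 3), (m : ℝ)⁻¹ ≤ 1 + log (q ^ 3 : ℕ) := sum_Icc_inv_le_one_add_log _
    _ = 1 + 3 * log q := by push_cast; rw [log_pow]; norm_num
    _ ≤ (3 + 1 / log 2) * log q := by linarith

lemma natLog_two_pow_three_add_one_le {q : ℕ} (hq : 2 ≤ q) :
    (Nat.log 2 (q ^ 3) + 1 : ℝ) ≤ 4 / log 2 * log q := by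
  have hlog2 := log_pos one_lt_two
  have hlog : log 2 ≤ log q := log_le_log two_pos (by exact_mod_cast hq)
  have h := natLog_le_logb (q ^ 3) 2
  push_cast at h
  rw [logb, log_pow, Nat.cast_ofNat, le_div_iff₀ hlog2] at h
  rw [div_mul_eq_mul_div, le_div_iff₀ hlog2]
  linarith

lemma pabs_eq_inv_pow (p x : ℕ) : pabs p x = ((p : ℝ) ^ padicValNat p x)⁻¹ := by
  rw [pabs, zpow_neg, zpow_natCast]

lemma natCast_mul_pabs {p : ℕ} (hp : p ≠ 0) (x : ℕ) :
    (x : ℝ) * pabs p x = (x / p ^ padicValNat p x : ℕ) := by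
  rw [Nat.cast_div pow_padicValNat_dvd (by positivity), pabs_eq_inv_pow, div_eq_mul_inv,
    Nat.cast_pow]

lemma succ_mul_log_two_le_log_two_div_pabs {p : ℕ} (hp : 2 ≤ p) (x : ℕ) :
    (padicValNat p x + 1) * log 2 ≤ log (2 / pabs p x) := by
  rw [pabs_eq_inv_pow, div_inv_eq_mul, ← Nat.cast_two (R := ℝ), ← Nat.cast_succ, ← log_pow]
  gcongr
  rw [pow_succ']
  gcongr

lemma div_pow_padicValNat_pos {p x : ℕ} (hp : p ≠ 0) (hx : x ≠ 0) :
    0 < x / p ^ padicValNat p x :=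
  Nat.div_pos (Nat.le_of_dvd (Nat.pos_of_ne_zero hx) pow_padicValNat_dvd) (by positivity)

lemma injective_padicValNat_prod_div (p : ℕ) :
    Function.Injective fun x => (padicValNat p x, x / p ^ padicValNat p x) := by
  intro x y hxy
  simp only [Prod.mk.injEq] at hxy
  rw [← Nat.mul_div_cancel' (pow_padicValNat_dvd (p := p) (n := x)),
    ← Nat.mul_div_cancel' (pow_padicValNat_dvd (p := p) (n := y)), hxy.2, hxy.1]

lemma padicValNat_prod_div_mem_range_product_Icc {p : ℕ} (hp : 2 ≤ p) {N x : ℕ}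
    (hx : x ∈ Icc 1 N) :
    (padicValNat p x, x / p ^ padicValNat p x) ∈ range (Nat.log 2 N + 1) ×ˢ Icc 1 N := by
  obtain ⟨hx1, hxN⟩ := mem_Icc.1 hx
  simp only [mem_product, mem_range, mem_Icc, Nat.lt_add_one_iff]
  refine ⟨?_, div_pow_padicValNat_pos (by omega) (by omega), (Nat.div_le_self _ _).trans hxN⟩
  calc padicValNat p x ≤ Nat.log p x := padicValNat_le_nat_log x
    _ ≤ Nat.log 2 x := Nat.log_anti_left one_lt_two hp
    _ ≤ Nat.log 2 N := Nat.log_mono_right hxN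

lemma one_div_pabs_log_le {p : ℕ} (hp : 2 ≤ p) {a : ℝ} (ha : 0 ≤ a) (ha2 : a ≤ 2) {q x : ℕ}
    (hq : 2 ≤ q) (hqx : q ≤ x) :
    1 / (x * pabs p x * log (2 / pabs p x) ^ a * log x ^ (2 - a)) ≤
      ((padicValNat p x + 1 : ℝ) ^ (-a) * ((x / p ^ padicValNat p x : ℕ) : ℝ)⁻¹) /
        (log 2 ^ a * log q ^ (2 - a)) := by
  have hlogq : 0 < log q := log_pos (by exact_mod_cast hq)
  have hm := div_pow_padicValNat_pos (p := p) (by omega) (x := x) (by omega)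
  calc 1 / (x * pabs p x * log (2 / pabs p x) ^ a * log x ^ (2 - a))
      ≤ 1 / ((x / p ^ padicValNat p x : ℕ) * ((padicValNat p x + 1) * log 2) ^ a *
          log q ^ (2 - a)) := by
        rw [natCast_mul_pabs (by omega)]
        have hlog := succ_mul_log_two_le_log_two_div_pabs hp x
        gcongr
        exact mul_nonneg (Nat.cast_nonneg _) (rpow_nonneg (le_trans (by positivity) hlog) a)
      _ = _ := by
        rw [mul_rpow (by positivity) (log_nonneg one_le_two), rpow_neg (by positivity)]
        field_simp

theorem stmt_3 (p : ℕ) (hp : p.Prime) (a : ℝ) (ha : 0 ≤ a) (ha1 : a < 1) :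
    ∃ C > 0, ∀ q : ℕ, 2 ≤ q →
      ∑ x ∈ Finset.Icc q (q ^ 3),
        1 / (x * pabs p x * (Real.log (2 / pabs p x)) ^ a
              * (Real.log x) ^ (2 - a)) ≤ C := by
  refine ⟨(3 + 1 / log 2) * (4 / log 2) ^ (1 - a) / ((1 - a) * log 2 ^ a), by positivity,
    fun q hq => ?_⟩
  have hlogq : 0 < log q := log_pos (by exact_mod_cast hq)
  calc ∑ x ∈ Icc q (q ^ 3), 1 / (x * pabs p x * log (2 / pabs p x) ^ a * log x ^ (2 - a))
      ≤ ∑ y ∈ range (Nat.log 2 (q ^ 3) + 1) ×ˢ Icc 1 (q ^ 3),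
          ((y.1 + 1 : ℝ) ^ (-a) * (y.2 : ℝ)⁻¹) / (log 2 ^ a * log q ^ (2 - a)) := by
        refine sum_le_sum_of_injective _ (injective_padicValNat_prod_div p) ?_
          (fun y _ => by positivity) ?_
        · exact fun x hx => padicValNat_prod_div_mem_range_product_Icc hp.two_le
            (Icc_subset_Icc (by omega) le_rfl hx)
        · intro x hx
          exact_mod_cast one_div_pabs_log_le hp.two_le ha (by linarith) hq (mem_Icc.1 hx).1
    _ = (∑ v ∈ range (Nat.log 2 (q ^ 3) + 1), (v + 1 : ℝ) ^ (-a)) *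
          (∑ m ∈ Icc 1 (q ^ 3), (m : ℝ)⁻¹) / (log 2 ^ a * log q ^ (2 - a)) := by
        simp only [sum_product, sum_div, sum_mul_sum]
    _ ≤ (4 / log 2 * log q) ^ (1 - a) / (1 - a) * ((3 + 1 / log 2) * log q) /
          (log 2 ^ a * log q ^ (2 - a)) := by
        gcongr
        · refine (sum_range_rpow_neg_le ha ha1 _).trans ?_
          gcongr
          exact_mod_cast natLog_two_pow_three_add_one_le hq
        · exact sum_Icc_inv_le_mul_log hq
    _ = (3 + 1 / log 2) * (4 / log 2) ^ (1 - a) / ((1 - a) * log 2 ^ a) := by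
        have hsplit : log q ^ (2 - a) = log q ^ (1 - a) * log q := by
          rw [← rpow_add_one hlogq.ne']; ring_nf
        rw [mul_rpow (by positivity) hlogq.le, hsplit]
        field_simp
end

section
/- Let p be a prime and q ≥ 2 an integer. Then the sum over j from 0 to ⌊3 log q⌋ of (1/(j+1)^a) times the sum of 1/x over integers x not divisible by p with q/p^j ≤ x ≤ q³/p^j is O((log q)^{2−a}), where 0 ≤ a < 1 and the implied constant depends only on a and p. -/
/-!
Every x in the inner sum is a positive integer at most q³, so each inner sum is at most the
harmonic number H_{q³} ≤ 1 + 3 log q = O(log q). The weights satisfy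
∑_{j<N} (j+1)^{-a} ≤ N^{1-a}/(1-a), and N = ⌊3 log q⌋ + 1 = O(log q), which gives
O((log q)^{1-a} · log q).
-/

open Finset Real

theorem rpow_one_sub_add_div_rpow_le {a x : ℝ} (ha : 0 ≤ a) (ha1 : a < 1) (hx : 0 ≤ x) :
    x ^ (1 - a) + (1 - a) / (x + 1) ^ a ≤ (x + 1) ^ (1 - a) := by
  have hx1 : 0 < x + 1 := by linarith
  have hpow : 0 < (x + 1) ^ a := rpow_pos_of_pos hx1 a
  have amgm : x ^ (1 - a) * (x + 1) ^ a ≤ (1 - a) * x + a * (x + 1) :=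
    geom_mean_le_arith_mean2_weighted (by linarith) ha hx hx1.le (by ring)
  have hsplit : (x + 1) ^ (1 - a) = (x + a) / (x + 1) ^ a + (1 - a) / (x + 1) ^ a := by
    rw [rpow_sub hx1, rpow_one, ← add_div]
    ring_nf
  rw [hsplit, add_le_add_iff_right, le_div_iff₀ hpow]
  linarith

theorem sum_range_one_div_rpow_le {a : ℝ} (ha : 0 ≤ a) (ha1 : a < 1) (n : ℕ) :
    ∑ j ∈ range n, 1 / ((j : ℝ) + 1) ^ a ≤ (n : ℝ) ^ (1 - a) / (1 - a) := by
  have h1a : 0 < 1 - a := by linarith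
  induction n with
  | zero => simp [zero_rpow h1a.ne']
  | succ n ih =>
    have step := rpow_one_sub_add_div_rpow_le ha ha1 (Nat.cast_nonneg n)
    rw [sum_range_succ, Nat.cast_succ]
    calc _ ≤ (n : ℝ) ^ (1 - a) / (1 - a) + 1 / ((n : ℝ) + 1) ^ a := by gcongr
      _ = ((n : ℝ) ^ (1 - a) + (1 - a) / ((n : ℝ) + 1) ^ a) / (1 - a) := by field_simp
      _ ≤ _ := by gcongr

theorem sum_one_div_le_one_add_log {s : Finset ℕ} {n : ℕ} (hs : s ⊆ Icc 1 n) :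
    ∑ x ∈ s, (1 : ℝ) / x ≤ 1 + log n :=
  calc ∑ x ∈ s, (1 : ℝ) / x ≤ ∑ x ∈ Icc 1 n, (1 : ℝ) / x :=
        sum_le_sum_of_subset_of_nonneg hs fun _ _ _ => by positivity
    _ = harmonic n := by simp [harmonic_eq_sum_Icc, one_div]
    _ ≤ 1 + log n := harmonic_le_one_add_log n

/-- Since every integer divides `0`, the condition `¬ p ∣ x` already forces `x ≥ 1`. -/
theorem filter_not_dvd_Icc_floor_div_subset (p lo m d : ℕ) :
    (Icc lo ⌊(m : ℝ) / d⌋₊).filter (fun x => ¬ p ∣ x) ⊆ Icc 1 m := by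
  intro x hx
  simp only [mem_filter, mem_Icc, Nat.floor_div_eq_div] at hx ⊢
  obtain ⟨⟨-, hxm⟩, hpx⟩ := hx
  exact ⟨Nat.one_le_iff_ne_zero.mpr (by rintro rfl; exact hpx (dvd_zero p)),
    hxm.trans (Nat.div_le_self m d)⟩

theorem sum_filter_not_dvd_one_div_le (p q j lo : ℕ) :
    ∑ x ∈ (Icc lo ⌊(q : ℝ) ^ 3 / p ^ j⌋₊).filter (fun x => ¬ p ∣ x), (1 : ℝ) / x
      ≤ 1 + 3 * log q := by
  have hsub := filter_not_dvd_Icc_floor_div_subset p lo (q ^ 3) (p ^ j)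
  push_cast at hsub
  simpa [log_pow] using sum_one_div_le_one_add_log hsub

theorem stmt_5_general (p : ℕ) (a : ℝ) (ha : 0 ≤ a) (ha1 : a < 1) :
    ∃ C > 0, ∀ q : ℕ, 2 ≤ q →
      ∑ j ∈ Finset.range (⌊3 * Real.log q⌋₊ + 1),
        (1 / ((j : ℝ) + 1) ^ a) *
          ∑ x ∈ (Finset.Icc ⌈(q : ℝ) / p ^ j⌉₊ ⌊(q : ℝ) ^ 3 / p ^ j⌋₊).filter
              (fun x => ¬ p ∣ x),
            (1 : ℝ) / x
        ≤ C * (Real.log q) ^ (2 - a) := by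
  have h1a : 0 < 1 - a := by linarith
  refine ⟨5 ^ (2 - a) / (1 - a), by positivity, fun q hq => ?_⟩
  set L := log q
  have hL : 1 / 2 < L := by
    have : log 2 ≤ L := log_le_log (by norm_num) (by exact_mod_cast hq)
    linarith [log_two_gt_d9]
  have hN : ((⌊3 * L⌋₊ + 1 : ℕ) : ℝ) ≤ 5 * L := by
    push_cast
    linarith [Nat.floor_le (show 0 ≤ 3 * L by positivity)]
  calc _ ≤ ∑ j ∈ range (⌊3 * L⌋₊ + 1), 1 / ((j : ℝ) + 1) ^ a * (5 * L) := by
        gcongr with j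
        linarith [sum_filter_not_dvd_one_div_le p q j ⌈(q : ℝ) / p ^ j⌉₊]
    _ = (∑ j ∈ range (⌊3 * L⌋₊ + 1), 1 / ((j : ℝ) + 1) ^ a) * (5 * L) := (sum_mul ..).symm
    _ ≤ ((⌊3 * L⌋₊ + 1 : ℕ) : ℝ) ^ (1 - a) / (1 - a) * (5 * L) := by
        gcongr
        exact sum_range_one_div_rpow_le ha ha1 _
    _ ≤ (5 * L) ^ (1 - a) / (1 - a) * (5 * L) := by gcongr
    _ = 5 ^ (2 - a) / (1 - a) * L ^ (2 - a) := by
        rw [div_mul_eq_mul_div, ← rpow_add_one (by positivity), mul_rpow (by norm_num)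
          (by positivity), show 1 - a + 1 = 2 - a by ring]
        ring

theorem stmt_5 (p : ℕ) (hp : p.Prime) (a : ℝ) (ha : 0 ≤ a) (ha1 : a < 1) :
    ∃ C > 0, ∀ q : ℕ, 2 ≤ q →
      ∑ j ∈ Finset.range (⌊3 * Real.log q⌋₊ + 1),
        (1 / ((j : ℝ) + 1) ^ a) *
          ∑ x ∈ (Finset.Icc ⌈(q : ℝ) / p ^ j⌉₊ ⌊(q : ℝ) ^ 3 / p ^ j⌋₊).filter
              (fun x => ¬ p ∣ x),
            (1 : ℝ) / x
        ≤ C * (Real.log q) ^ (2 - a) :=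
  stmt_5_general p a ha ha1
end
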